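/- Let ℓ be a learning function, let K ≥ 3, and let q and u lie in the interior of the simplex Δ^{K−1} (all coordinates strictly positive). Let h*(q)_k = q_k(1−q_k)/D(q) where D(q) = 1 − ∑_k q_k², and let ℓ^{-1} be the inverse of ℓ on [0,1]. Suppose the exponent p satisfies 0 < p < log( (u_(1)+u_(2))/u_(K) ) / ( −log( K·ℓ^{-1}(1/K) ) ), where u_(1) ≤ ⋯ ≤ u_(K) are the ordered coordinates of u. Then H(h*(q))^p · C(h*(q), u) > q·u; that is, integrators' system knowledge exceeds the average specialists' system knowledge at the productive optimum. -/
import Mathlib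


open Finset

noncomputable section

/-- The simplex Δ^{K-1}: nonnegative coordinates summing to 1. -/
def simplex (K : ℕ) : Set (Fin K → ℝ) :=
  {π | (∀ k, 0 ≤ π k) ∧ ∑ k, π k = 1}

/-- ℓ¹-norm on ℝ^K. -/
def l1 {K : ℕ} (a : Fin K → ℝ) : ℝ := ∑ k, |a k|

/-- Coverage operator C(a,b) = ∑ min(a_k, b_k). -/
def Cov {K : ℕ} (a b : Fin K → ℝ) : ℝ := ∑ k, min (a k) (b k)

/-- A learning function ℓ : [0,∞) → [0,∞): continuous, strictly increasing,
strictly concave, ℓ(0)=0, ℓ(1)=1, continuously differentiable on [0,1]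
with derivative `deriv`, ℓ'(1) > 0 (finiteness of ℓ'(0) is automatic). -/
structure LearningFunction where
  toFun : ℝ → ℝ
  deriv : ℝ → ℝ
  continuousOn : ContinuousOn toFun (Set.Ici 0)
  strictMonoOn : StrictMonoOn toFun (Set.Ici 0)
  strictConcaveOn : StrictConcaveOn ℝ (Set.Ici 0) toFun
  nonneg : ∀ s, 0 ≤ s → 0 ≤ toFun s
  map_zero : toFun 0 = 0
  map_one : toFun 1 = 1
  hasDerivAt : ∀ s ∈ Set.Icc (0:ℝ) 1,
    HasDerivWithinAt toFun (deriv s) (Set.Icc (0:ℝ) 1) s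
  derivContinuousOn : ContinuousOn deriv (Set.Icc (0:ℝ) 1)
  deriv_one_pos : 0 < deriv 1

/-- Maximal feasible scale H(π) = sup { H ≥ 0 : ∑ ℓ(H π_k) ≤ 1 }. -/
def Hscale {K : ℕ} (L : LearningFunction) (π : Fin K → ℝ) : ℝ :=
  sSup {H : ℝ | 0 ≤ H ∧ ∑ k, L.toFun (H * π k) ≤ 1}

/-- Relative inefficiency index λ(π) = 1/H(π). -/
def lam {K : ℕ} (L : LearningFunction) (π : Fin K → ℝ) : ℝ :=
  1 / Hscale L π

/-- Γ(z) = ‖z‖₁ λ(z/‖z‖₁) for z ≠ 0, Γ(0) = 0. -/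
def Gam {K : ℕ} (L : LearningFunction) (z : Fin K → ℝ) : ℝ :=
  if z = 0 then 0 else l1 z * lam L (fun k => z k / l1 z)

/-- Fragmentation index D(π) = 1 - ∑ π_k². -/
def Dfrag {K : ℕ} (π : Fin K → ℝ) : ℝ := 1 - ∑ k, (π k) ^ 2

/-- Lipschitz constant L_Γ = ℓ̄ + 2 ℓ̄³/ℓ̲. -/
def LGam (L : LearningFunction) : ℝ := L.deriv 0 + 2 * L.deriv 0 ^ 3 / L.deriv 1


lemma cov_lower_bound {K : ℕ} (a v : Fin K → ℝ) (i j : Fin K) (hij : i ≠ j)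
    (ha0 : ∀ k, 0 ≤ a k) (ha1 : ∑ k, a k = 1) (hahalf : ∀ k, a k ≤ 1 / 2)
    (hv0 : ∀ k, 0 ≤ v k) (hv1 : ∑ k, v k = 1)
    (hi : ∀ k, v i ≤ v k) (hj : ∀ k, k ≠ i → v j ≤ v k) (hj2 : v j ≤ 1 / 2) :
    v i + v j ≤ Cov a v := by
  classical
  have hmin0 : ∀ k, (0:ℝ) ≤ min (a k) (v k) := fun k => le_min (ha0 k) (hv0 k)
  set S : Finset (Fin K) := Finset.univ.filter fun k => v k ≤ a k with hS
  by_cases h2 : ∃ x ∈ S, ∃ y ∈ S, x ≠ y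
  · obtain ⟨x, hx, y, hy, hxy⟩ := h2
    have hxS : v x ≤ a x := (Finset.mem_filter.mp hx).2
    have hyS : v y ≤ a y := (Finset.mem_filter.mp hy).2
    have hsum2 : v x + v y ≤ Cov a v := by
      have hsub : ∑ k ∈ ({x, y} : Finset (Fin K)), min (a k) (v k) ≤ Cov a v :=
        Finset.sum_le_sum_of_subset_of_nonneg (Finset.subset_univ _)
          (fun k _ _ => hmin0 k)
      rw [Finset.sum_pair hxy, min_eq_right hxS, min_eq_right hyS] at hsub
      exact hsub
    have hvij : v i + v j ≤ v x + v y := by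
      by_cases hxi : x = i
      · have : v j ≤ v y := hj y (by rw [← hxi]; exact hxy.symm)
        have : v i ≤ v x := by rw [hxi]
        have hjy : v j ≤ v y := hj y (by rw [← hxi]; exact hxy.symm)
        linarith
      · by_cases hyi : y = i
        · have hjx : v j ≤ v x := hj x hxi
          have : v i = v y := by rw [hyi]
          linarith
        · have h1 : v i ≤ v x := hi x
          have h2 : v j ≤ v y := hj y hyi
          linarith
    linarith
  · push_neg at h2
    by_cases hne : S.Nonempty
    · obtain ⟨k0, hk0⟩ := hne
      have hk0S : v k0 ≤ a k0 := (Finset.mem_filter.mp hk0).2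
      have hout : ∀ k, k ≠ k0 → a k < v k := by
        intro k hk
        by_contra hcon
        push_neg at hcon
        have : k ∈ S := Finset.mem_filter.mpr ⟨Finset.mem_univ k, hcon⟩
        exact hk (h2 k this k0 hk0)
      have hCov : Cov a v = v k0 + ∑ k ∈ Finset.univ.erase k0, a k := by
        rw [Cov, ← Finset.add_sum_erase _ _ (Finset.mem_univ k0), min_eq_right hk0S]
        congr 1
        exact Finset.sum_congr rfl fun k hk =>
          min_eq_left (hout k (Finset.mem_erase.mp hk).1).le
      have herase : ∑ k ∈ Finset.univ.erase k0, a k = 1 - a k0 := by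
        have := Finset.add_sum_erase Finset.univ a (Finset.mem_univ k0)
        linarith [this.symm ▸ ha1]
      have hik0 : v i ≤ v k0 := hi k0
      have hak0 : a k0 ≤ 1/2 := hahalf k0
      rw [hCov, herase]
      linarith
    · have hall : ∀ k, a k < v k := by
        intro k
        by_contra hcon
        push_neg at hcon
        exact hne ⟨k, Finset.mem_filter.mpr ⟨Finset.mem_univ k, hcon⟩⟩
      have hCov : Cov a v = 1 := by
        rw [Cov, ← ha1]
        exact Finset.sum_congr rfl fun k _ => min_eq_left (hall k).le
      have : v i + v j ≤ 1 := by
        have hsub : ∑ k ∈ ({i, j} : Finset (Fin K)), v k ≤ ∑ k, v k :=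
          Finset.sum_le_sum_of_subset_of_nonneg (Finset.subset_univ _)
            (fun k _ _ => hv0 k)
        rw [Finset.sum_pair hij, hv1] at hsub
        exact hsub
      linarith [hCov]


lemma invFun_spec (L : LearningFunction) {K : ℕ} (hK : 3 ≤ K) :
    L.toFun (Function.invFunOn L.toFun (Set.Icc 0 1) (1 / (K:ℝ))) = 1 / (K:ℝ) ∧
    0 < Function.invFunOn L.toFun (Set.Icc 0 1) (1 / (K:ℝ)) ∧
    Function.invFunOn L.toFun (Set.Icc 0 1) (1 / (K:ℝ)) < 1 / (K:ℝ) := by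
  have hK3 : (3:ℝ) ≤ K := by exact_mod_cast hK
  have hK0 : (0:ℝ) < K := by linarith
  have hK1 : (1:ℝ) ≤ K := by linarith
  have hinvpos : 0 < 1 / (K:ℝ) := by positivity
  have hinvle : 1 / (K:ℝ) ≤ 1 := by
    rw [div_le_one hK0]; exact hK1
  have hinvlt : 1 / (K:ℝ) < 1 := by
    rw [div_lt_one hK0]
    linarith
  have hex : ∃ x ∈ Set.Icc (0:ℝ) 1, L.toFun x = 1 / (K:ℝ) := by
    have hcont : ContinuousOn L.toFun (Set.Icc 0 1) :=
      L.continuousOn.mono (by intro x hx; exact hx.1)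
    have := intermediate_value_Icc (zero_le_one) hcont
    have hmem : (1 / (K:ℝ)) ∈ Set.Icc (L.toFun 0) (L.toFun 1) := by
      rw [L.map_zero, L.map_one]; exact ⟨hinvpos.le, hinvle⟩
    obtain ⟨x, hx, hfx⟩ := this hmem
    exact ⟨x, hx, hfx⟩
  have heq : L.toFun (Function.invFunOn L.toFun (Set.Icc 0 1) (1 / (K:ℝ))) = 1 / (K:ℝ) :=
    Function.invFunOn_eq hex
  have hmem : Function.invFunOn L.toFun (Set.Icc 0 1) (1 / (K:ℝ)) ∈ Set.Icc (0:ℝ) 1 :=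
    Function.invFunOn_mem hex
  set m := Function.invFunOn L.toFun (Set.Icc 0 1) (1 / (K:ℝ)) with hm
  have hmne : m ≠ 0 := by
    intro h
    rw [h, L.map_zero] at heq
    exact hinvpos.ne heq
  have hmpos : 0 < m := lt_of_le_of_ne hmem.1 (Ne.symm hmne)
  -- strict concavity: ℓ(1/K) > 1/K
  have hconc : 1 / (K:ℝ) < L.toFun (1 / (K:ℝ)) := by
    have h01 : (0:ℝ) ∈ Set.Ici (0:ℝ) := Set.self_mem_Ici
    have h11 : (1:ℝ) ∈ Set.Ici (0:ℝ) := by norm_num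
    have hne01 : (0:ℝ) ≠ 1 := by norm_num
    have ha : 0 < 1 - 1 / (K:ℝ) := by linarith
    have := L.strictConcaveOn.2 h01 h11 hne01 ha hinvpos (by ring)
    simpa [L.map_zero, L.map_one, smul_eq_mul] using this
  have hmlt : m < 1 / (K:ℝ) := by
    have := L.strictMonoOn.lt_iff_lt (Set.mem_Ici.mpr hmem.1) (Set.mem_Ici.mpr hinvpos.le)
    rw [← this, heq]
    exact hconc
  exact ⟨heq, hmpos, hmlt⟩

lemma Hscale_ge (L : LearningFunction) {K : ℕ} (hK : 3 ≤ K) (π : Fin K → ℝ)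
    (hπ0 : ∀ k, 0 ≤ π k) (hπ1 : ∑ k, π k = 1) :
    (K:ℝ) * Function.invFunOn L.toFun (Set.Icc 0 1) (1 / (K:ℝ)) ≤ Hscale L π := by
  classical
  obtain ⟨heq, hmpos, hmlt⟩ := invFun_spec L (K := K) hK
  set m := Function.invFunOn L.toFun (Set.Icc 0 1) (1 / (K:ℝ)) with hm
  have hK0 : (0:ℝ) < K := by
    have : (3:ℝ) ≤ K := by exact_mod_cast hK
    linarith
  -- bounded above by K
  have hbdd : BddAbove {H : ℝ | 0 ≤ H ∧ ∑ k, L.toFun (H * π k) ≤ 1} := by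
    refine ⟨(K:ℝ), ?_⟩
    rintro H ⟨hH0, hH1⟩
    by_contra hcon
    push_neg at hcon
    obtain ⟨k0, hk0⟩ : ∃ k0, 1 / (K:ℝ) ≤ π k0 := by
      by_contra hall
      push_neg at hall
      have : ∑ k, π k < ∑ _k : Fin K, 1 / (K:ℝ) := by
        apply Finset.sum_lt_sum_of_nonempty
        · exact ⟨⟨0, by omega⟩, Finset.mem_univ _⟩
        · intro k _; exact hall k
      rw [hπ1, Finset.sum_const, Finset.card_univ, Fintype.card_fin, nsmul_eq_mul] at this
      rw [mul_one_div, div_self hK0.ne'] at this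
      exact lt_irrefl _ this
    have hπk0pos : 0 < π k0 := lt_of_lt_of_le (by positivity) hk0
    have h1lt : 1 < H * π k0 := by
      have h1 : (K:ℝ) * (1 / (K:ℝ)) ≤ (K:ℝ) * π k0 := by
        apply mul_le_mul_of_nonneg_left hk0 hK0.le
      have h2 : (K:ℝ) * π k0 < H * π k0 := mul_lt_mul_of_pos_right hcon hπk0pos
      rw [mul_one_div, div_self hK0.ne'] at h1
      linarith
    have hlt : 1 < L.toFun (H * π k0) := by
      have := L.strictMonoOn (Set.mem_Ici.mpr zero_le_one)
        (Set.mem_Ici.mpr (by linarith : (0:ℝ) ≤ H * π k0)) h1lt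
      rwa [L.map_one] at this
    have hge : L.toFun (H * π k0) ≤ ∑ k, L.toFun (H * π k) :=
      Finset.single_le_sum (fun k _ => L.nonneg _ (mul_nonneg hH0 (hπ0 k)))
        (Finset.mem_univ k0)
    linarith
  -- Km is in the set via Jensen
  have hmemS : (K:ℝ) * m ∈ {H : ℝ | 0 ≤ H ∧ ∑ k, L.toFun (H * π k) ≤ 1} := by
    constructor
    · exact (mul_pos hK0 hmpos).le
    · have hcc : ConcaveOn ℝ (Set.Ici 0) L.toFun := L.strictConcaveOn.concaveOn
      have hjensen := hcc.le_map_sum (t := Finset.univ) (w := fun _ : Fin K => 1 / (K:ℝ))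
        (p := fun k => (K:ℝ) * m * π k)
        (fun i _ => by positivity)
        (by
          rw [Finset.sum_const, Finset.card_univ, Fintype.card_fin, nsmul_eq_mul,
            mul_one_div, div_self hK0.ne'])
        (fun i _ => Set.mem_Ici.mpr (mul_nonneg (mul_nonneg hK0.le hmpos.le) (hπ0 i)))
      have harg : ∑ i, (1 / (K:ℝ)) • ((K:ℝ) * m * π i) = m := by
        simp only [smul_eq_mul]
        have : ∀ i, 1 / (K:ℝ) * ((K:ℝ) * m * π i) = m * π i := by
          intro i; field_simp
        rw [Finset.sum_congr rfl fun i _ => this i, ← Finset.mul_sum, hπ1, mul_one]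
      rw [harg] at hjensen
      simp only [smul_eq_mul] at hjensen
      rw [← Finset.mul_sum, heq] at hjensen
      have hKinv : (0:ℝ) < 1 / (K:ℝ) := by positivity
      have h2 : (1/(K:ℝ)) * (∑ k, L.toFun ((K:ℝ) * m * π k)) ≤ (1/(K:ℝ)) * 1 := by
        rw [mul_one]; exact hjensen
      exact le_of_mul_le_mul_left h2 hKinv
  exact le_csSup hbdd hmemS


/-- Integrator civic advantage: under the diffuse-civic-relevance bound on p,
integrators' system knowledge H(h*(q))^p · C(h*(q),u) exceeds specialists'
average system knowledge q·u at the productive optimum. -/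
theorem integrator_civic_advantage {K : ℕ} (hK : 3 ≤ K) (L : LearningFunction)
    (q u : Fin K → ℝ) (hq : q ∈ simplex K) (hu : u ∈ simplex K)
    (hqpos : ∀ k, 0 < q k) (hupos : ∀ k, 0 < u k)
    (p : ℝ) (hp : 0 < p)
    (hp' : p <
      Real.log ((u (Tuple.sort u ⟨0, by omega⟩) + u (Tuple.sort u ⟨1, by omega⟩)) /
          u (Tuple.sort u ⟨K - 1, by omega⟩)) /
        (-Real.log ((K : ℝ) * Function.invFunOn L.toFun (Set.Icc 0 1) (1 / (K : ℝ))))) :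
    ∑ k, q k * u k <
      Hscale L (fun k => q k * (1 - q k) / Dfrag q) ^ p *
        Cov (fun k => q k * (1 - q k) / Dfrag q) u := by
  classical
  obtain ⟨hq0, hq1⟩ := hq
  obtain ⟨hu0, hu1⟩ := hu
  have hK3 : (3:ℝ) ≤ K := by exact_mod_cast hK
  have hK0 : (0:ℝ) < K := by linarith
  obtain ⟨hℓm, hm0, hmK⟩ := invFun_spec L (K := K) hK
  set m := Function.invFunOn L.toFun (Set.Icc 0 1) (1 / (K:ℝ)) with hmdef
  set σ := Tuple.sort u with hσdef
  have hmono : Monotone (u ∘ σ) := Tuple.monotone_sort u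
  have hK1 : 0 < K := by omega
  let i0 : Fin K := ⟨0, by omega⟩
  let i1 : Fin K := ⟨1, by omega⟩
  let i2 : Fin K := ⟨2, by omega⟩
  let iK : Fin K := ⟨K - 1, by omega⟩
  have hi0def : i0 = ⟨0, by omega⟩ := rfl
  have hi1def : i1 = ⟨1, by omega⟩ := rfl
  have hi2def : i2 = ⟨2, by omega⟩ := rfl
  have hiKdef : iK = ⟨K - 1, by omega⟩ := rfl
  have hp'' : p <
      Real.log ((u (σ i0) + u (σ i1)) / u (σ iK)) / (-Real.log ((K:ℝ) * m)) := hp'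
  -- sorted facts
  have hle_top : ∀ k, u k ≤ u (σ iK) := by
    intro k
    have h1 : σ.symm k ≤ iK := by
      rw [Fin.le_def]
      have := (σ.symm k).isLt
      simp only [hiKdef]
      omega
    have := hmono h1
    simpa using this
  have hi_min : ∀ k, u (σ i0) ≤ u k := by
    intro k
    have h1 : i0 ≤ σ.symm k := by
      rw [Fin.le_def]; simp [hi0def]
    have := hmono h1
    simpa using this
  have hj_min : ∀ k, k ≠ σ i0 → u (σ i1) ≤ u k := by
    intro k hk
    have h1 : i1 ≤ σ.symm k := by
      rw [Fin.le_def]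
      have : σ.symm k ≠ i0 := by
        intro h
        apply hk
        rw [← h]; simp
      simp only [hi1def]
      have hv : (σ.symm k).val ≠ 0 := by
        intro h0
        apply this
        rw [hi0def]
        exact Fin.ext h0
      omega
    have := hmono h1
    simpa using this
  have hij : σ i0 ≠ σ i1 := by
    intro h
    have := σ.injective h
    rw [hi0def, hi1def] at this
    simp [Fin.ext_iff] at this
  have hi1i2 : σ i1 ≠ σ i2 := by
    intro h
    have := σ.injective h
    rw [hi1def, hi2def] at this
    simp [Fin.ext_iff] at this
  have hu2half : u (σ i1) ≤ 1 / 2 := by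
    have h12 : u (σ i1) ≤ u (σ i2) := by
      have h1 : i1 ≤ i2 := by rw [Fin.le_def]; simp [hi1def, hi2def]
      exact hmono h1
    have hsum : u (σ i1) + u (σ i2) ≤ 1 := by
      have hsub : ∑ k ∈ ({σ i1, σ i2} : Finset (Fin K)), u k ≤ ∑ k, u k :=
        Finset.sum_le_sum_of_subset_of_nonneg (Finset.subset_univ _)
          (fun k _ _ => hu0 k)
      rwa [Finset.sum_pair hi1i2, hu1] at hsub
    linarith
  -- properties of h = h*(q)
  have hqlt1 : ∀ k, q k < 1 := by
    intro k
    have hsum := Finset.add_sum_erase Finset.univ q (Finset.mem_univ k)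
    have hpos : 0 < ∑ j ∈ Finset.univ.erase k, q j := by
      apply Finset.sum_pos (fun j _ => hqpos j)
      rw [← Finset.card_pos, Finset.card_erase_of_mem (Finset.mem_univ k),
        Finset.card_univ, Fintype.card_fin]
      omega
    rw [hq1] at hsum
    linarith
  have hD : Dfrag q = ∑ k, q k * (1 - q k) := by
    rw [Dfrag, Finset.sum_congr rfl (fun k _ => show q k * (1 - q k) = q k - q k ^ 2 by ring),
      Finset.sum_sub_distrib, hq1]
  have hDpos : 0 < Dfrag q := by
    rw [hD]
    apply Finset.sum_pos (fun k _ => mul_pos (hqpos k) (by linarith [hqlt1 k]))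
    exact ⟨i0, Finset.mem_univ i0⟩
  set h : Fin K → ℝ := fun k => q k * (1 - q k) / Dfrag q with hhdef
  have hh0 : ∀ k, 0 ≤ h k := fun k =>
    div_nonneg (mul_nonneg (hqpos k).le (by linarith [hqlt1 k])) hDpos.le
  have hh1 : ∑ k, h k = 1 := by
    rw [hhdef]
    simp only
    rw [← Finset.sum_div, ← hD, div_self hDpos.ne']
  have hhalf : ∀ k, h k ≤ 1 / 2 := by
    intro k
    have hqk1 : ∑ j ∈ Finset.univ.erase k, q j = 1 - q k := by
      have := Finset.add_sum_erase Finset.univ q (Finset.mem_univ k)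
      rw [hq1] at this
      linarith
    have key : q k * (1 - q k) ≤ ∑ j ∈ Finset.univ.erase k, q j * (1 - q j) := by
      have hsub : ∀ j ∈ Finset.univ.erase k, q j * q k ≤ q j * (1 - q j) := by
        intro j hj
        have hjk : j ≠ k := (Finset.mem_erase.mp hj).1
        have hqjk : q j + q k ≤ 1 := by
          have hsub2 : ∑ x ∈ ({j, k} : Finset (Fin K)), q x ≤ ∑ x, q x :=
            Finset.sum_le_sum_of_subset_of_nonneg (Finset.subset_univ _)
              (fun x _ _ => (hqpos x).le)
          rwa [Finset.sum_pair hjk, hq1] at hsub2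
        exact mul_le_mul_of_nonneg_left (by linarith) (hqpos j).le
      calc q k * (1 - q k) = (∑ j ∈ Finset.univ.erase k, q j) * q k := by
            rw [hqk1]; ring
        _ = ∑ j ∈ Finset.univ.erase k, q j * q k := Finset.sum_mul _ _ _
        _ ≤ _ := Finset.sum_le_sum hsub
    have hD2 : q k * (1 - q k) + ∑ j ∈ Finset.univ.erase k, q j * (1 - q j) = Dfrag q := by
      rw [hD]
      exact Finset.add_sum_erase Finset.univ (fun j => q j * (1 - q j)) (Finset.mem_univ k)
    show q k * (1 - q k) / Dfrag q ≤ 1 / 2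
    rw [div_le_iff₀ hDpos]
    linarith
  -- key bounds
  have hHge : (K:ℝ) * m ≤ Hscale L h := Hscale_ge L hK h hh0 hh1
  have hcov : u (σ i0) + u (σ i1) ≤ Cov h u :=
    cov_lower_bound h u (σ i0) (σ i1) hij hh0 hh1 hhalf (fun k => (hupos k).le) hu1
      hi_min hj_min hu2half
  have hc0 : 0 < (K:ℝ) * m := mul_pos hK0 hm0
  have hc1 : (K:ℝ) * m < 1 := by
    have := mul_lt_mul_of_pos_left hmK hK0
    rwa [mul_one_div, div_self hK0.ne'] at this
  have hb : 0 < -Real.log ((K:ℝ) * m) := by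
    have := Real.log_neg hc0 hc1
    linarith
  have u12pos : 0 < u (σ i0) + u (σ i1) := by
    have := hupos (σ i0); have := hupos (σ i1); linarith
  have uKpos : 0 < u (σ iK) := hupos (σ iK)
  have hpb : p * (-Real.log ((K:ℝ) * m)) <
      Real.log ((u (σ i0) + u (σ i1)) / u (σ iK)) := (lt_div_iff₀ hb).mp hp''
  -- chain
  have h1 : ∑ k, q k * u k ≤ u (σ iK) := by
    calc ∑ k, q k * u k ≤ ∑ k, q k * u (σ iK) :=
          Finset.sum_le_sum fun k _ => mul_le_mul_of_nonneg_left (hle_top k) (hqpos k).le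
      _ = u (σ iK) := by rw [← Finset.sum_mul, hq1, one_mul]
  have h2 : u (σ iK) < ((K:ℝ) * m) ^ p * (u (σ i0) + u (σ i1)) := by
    have hlog : Real.log (u (σ iK) / (u (σ i0) + u (σ i1))) < p * Real.log ((K:ℝ) * m) := by
      have e1 : Real.log (u (σ iK) / (u (σ i0) + u (σ i1))) =
          -Real.log ((u (σ i0) + u (σ i1)) / u (σ iK)) := by
        rw [Real.log_div uKpos.ne' u12pos.ne', Real.log_div u12pos.ne' uKpos.ne']
        ring
      rw [e1]
      linarith
    have hexp := Real.exp_lt_exp.mpr hlog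
    rw [Real.exp_log (div_pos uKpos u12pos)] at hexp
    rw [div_lt_iff₀ u12pos] at hexp
    calc u (σ iK) < Real.exp (p * Real.log ((K:ℝ) * m)) * (u (σ i0) + u (σ i1)) := hexp
      _ = ((K:ℝ) * m) ^ p * (u (σ i0) + u (σ i1)) := by
          rw [Real.rpow_def_of_pos hc0, mul_comm (Real.log ((K:ℝ) * m)) p]
  have h3 : ((K:ℝ) * m) ^ p * (u (σ i0) + u (σ i1)) ≤ Hscale L h ^ p * Cov h u := by
    have hH : ((K:ℝ) * m) ^ p ≤ Hscale L h ^ p := Real.rpow_le_rpow hc0.le hHge hp.le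
    exact mul_le_mul hH hcov u12pos.le (Real.rpow_nonneg (hc0.le.trans hHge) p)
  calc ∑ k, q k * u k ≤ u (σ iK) := h1
    _ < ((K:ℝ) * m) ^ p * (u (σ i0) + u (σ i1)) := h2
    _ ≤ Hscale L h ^ p * Cov h u := h3

end
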